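/- Define f : ℕ → ℕ → ℕ by f(0, m) = 0, f(n, 0) = 0, and f(n+1, m+1) = f(n+1, m) + f(n, m+1) + f(n, m) + 1, so that f(n, n) is the birthday of the square of a finite-born surreal form of birthday n. Then f(n, n) ∼ a·λ^n/√n as n → ∞, where λ = 3 + 2√2 and a = 2^(−9/4)·√(λ/π); precisely, the sequence (f(n, n)·√n)/λ^n converges to a as n → ∞. -/

import Mathlib

/-!
Write `g = 2 f + 1`. Then `g (n+1) (m+1) = g (n+1) m + g n (m+1) + g n m` and `g = 1` on the
boundary, and the mean over the unit circle of `(1 + √2 z) ^ n (1 + √2 / z) ^ m` satisfies the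
same recursion, because `(√2 z) (√2 / z) = 2`, and the same boundary values by the mean value
property. On the diagonal this kernel is `(3 + 2 √2 cos θ) ^ n`, so
`2π (2 f(n, n) + 1) = ∫_{-π}^{π} (3 + 2√2 cos θ)^n dθ`. Laplace's method at the maximum `θ = 0`
(substitute `θ = t / √n` and dominate by a Gaussian) gives
`√n ∫_{-π}^{π} ((a + b cos θ) / (a + b))^n dθ → √(2π (a + b) / b)`.
-/

open Filter Real

/-- The recurrence governing birthdays of surreal products. -/
def birthdayMulFun : ℕ → ℕ → ℕ
  | 0, _ => 0
  | _ + 1, 0 => 0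
  | n + 1, m + 1 =>
      birthdayMulFun (n + 1) m + birthdayMulFun n (m + 1) + birthdayMulFun n m + 1

open Topology MeasureTheory Set

theorem circleAverage_one_add_mul_pow (a : ℂ) (n : ℕ) :
    circleAverage (fun z => (1 + a * z) ^ n) 0 1 = 1 := by
  rw [(Differentiable.diffContOnCl (by fun_prop)).circleAverage]
  simp

theorem circleAverage_one_add_mul_inv_pow (a : ℂ) (n : ℕ) :
    circleAverage (fun z => (1 + a * z⁻¹) ^ n) 0 1 = 1 :=
  circleAverage_zero_one_congr_inv.trans (circleAverage_one_add_mul_pow a n)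

theorem ofReal_sqrt_two_mul_self : ((√2 : ℝ) : ℂ) * √2 = 2 := by
  rw [← Complex.ofReal_mul, mul_self_sqrt zero_le_two]
  norm_num

noncomputable def birthdayKernel (n m : ℕ) (z : ℂ) : ℂ :=
  (1 + √2 * z) ^ n * (1 + √2 * z⁻¹) ^ m

theorem circleIntegrable_birthdayKernel (n m : ℕ) :
    CircleIntegrable (birthdayKernel n m) 0 1 := by
  refine ContinuousOn.circleIntegrable zero_le_one fun z hz => ?_
  have hz0 : z ≠ 0 := Metric.ne_of_mem_sphere hz one_ne_zero
  unfold birthdayKernel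
  fun_prop (disch := exact hz0)

theorem birthdayKernel_succ_succ {z : ℂ} (hz : z ≠ 0) (n m : ℕ) :
    birthdayKernel (n + 1) (m + 1) z =
      birthdayKernel (n + 1) m z + birthdayKernel n (m + 1) z + birthdayKernel n m z := by
  have h : (√2 * z) * (√2 * z⁻¹) = 2 := by
    rw [mul_mul_mul_comm, mul_inv_cancel₀ hz, mul_one, ofReal_sqrt_two_mul_self]
  unfold birthdayKernel
  linear_combination (1 + √2 * z) ^ n * (1 + √2 * z⁻¹) ^ m * h

theorem circleAverage_birthdayKernel :
    ∀ n m : ℕ, circleAverage (birthdayKernel n m) 0 1 = 2 * birthdayMulFun n m + 1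
  | 0, m => by
    unfold birthdayKernel
    simpa [birthdayMulFun] using circleAverage_one_add_mul_inv_pow _ m
  | n + 1, 0 => by
    unfold birthdayKernel
    simpa [birthdayMulFun] using circleAverage_one_add_mul_pow _ (n + 1)
  | n + 1, m + 1 => by
    have hK := circleIntegrable_birthdayKernel
    calc circleAverage (birthdayKernel (n + 1) (m + 1)) 0 1
        = circleAverage (birthdayKernel (n + 1) m + birthdayKernel n (m + 1)
            + birthdayKernel n m) 0 1 :=
          circleAverage_congr_sphere fun z hz =>
            birthdayKernel_succ_succ (Metric.ne_of_mem_sphere hz (by norm_num)) n m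
      _ = 2 * birthdayMulFun (n + 1) (m + 1) + 1 := by
        rw [circleAverage_add ((hK _ _).add (hK _ _)) (hK _ _),
          circleAverage_add (hK _ _) (hK _ _), circleAverage_birthdayKernel (n + 1) m,
          circleAverage_birthdayKernel n (m + 1), circleAverage_birthdayKernel n m,
          birthdayMulFun]
        push_cast
        ring

theorem birthdayKernel_circleMap (n : ℕ) (θ : ℝ) :
    birthdayKernel n n (circleMap 0 1 θ) = ((3 + 2 * √2 * cos θ) ^ n : ℝ) := by
  set w := Complex.exp (θ * Complex.I)
  have hinv : w * w⁻¹ = 1 := mul_inv_cancel₀ (Complex.exp_ne_zero _)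
  have hcos : w + w⁻¹ = 2 * Complex.cos θ := by
    rw [← Complex.exp_neg, Complex.cos, neg_mul, mul_div_cancel₀ _ two_ne_zero]
  rw [birthdayKernel, ← mul_pow, circleMap_zero, Complex.ofReal_one, one_mul]
  push_cast
  congr 1
  linear_combination (√2 : ℂ) * hcos + (w * w⁻¹) * ofReal_sqrt_two_mul_self + 2 * hinv

theorem integral_three_add_two_sqrt_two_mul_cos_pow (n : ℕ) :
    ∫ θ in -π..π, (3 + 2 * √2 * cos θ) ^ n = 2 * π * (2 * birthdayMulFun n n + 1) := by
  have hper : Function.Periodic (fun θ => (3 + 2 * √2 * cos θ) ^ n) (2 * π) := fun θ => by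
    simp only [cos_add_two_pi]
  have hshift := hper.intervalIntegral_add_eq (-π) 0
  rw [show -π + 2 * π = π by ring, zero_add] at hshift
  have h := circleAverage_birthdayKernel n n
  simp only [circleAverage_def, birthdayKernel_circleMap, intervalIntegral.integral_ofReal,
    Complex.real_smul] at h
  have h' : (2 * π)⁻¹ * ∫ θ in 0..2 * π, (3 + 2 * √2 * cos θ) ^ n =
      2 * birthdayMulFun n n + 1 := by
    exact_mod_cast h
  rw [hshift, ← h', mul_inv_cancel_left₀ two_pi_pos.ne']

theorem tendsto_nat_mul_one_sub_cos_div_sqrt (t : ℝ) :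
    Tendsto (fun n : ℕ => n * (1 - cos (t / √n))) atTop (𝓝 (t ^ 2 / 2)) := by
  rw [← tendsto_sub_nhds_zero_iff]
  refine squeeze_zero_norm' ?_ (tendsto_const_div_atTop_nhds_zero_nat (t ^ 4 * (5 / 96)))
  filter_upwards [eventually_ge_atTop ⌈t ^ 2⌉₊, eventually_gt_atTop 0] with n htn hn
  have hn' : (0 : ℝ) < n := Nat.cast_pos.2 hn
  have hsq : (t / √n) ^ 2 = t ^ 2 / n := by rw [div_pow, sq_sqrt hn'.le]
  have hx : |t / √n| ≤ 1 := by
    rw [← sq_le_one_iff_abs_le_one, hsq, div_le_one hn']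
    exact Nat.ceil_le.1 htn
  calc ‖n * (1 - cos (t / √n)) - t ^ 2 / 2‖
        = |n * (cos (t / √n) - (1 - (t / √n) ^ 2 / 2))| := by
        rw [Real.norm_eq_abs, ← abs_neg, hsq]
        congr 1
        field_simp
        ring
    _ ≤ n * (|t / √n| ^ 4 * (5 / 96)) := by
        rw [abs_mul, abs_of_pos hn']
        gcongr
        exact cos_bound hx
    _ = t ^ 4 * (5 / 96) / n := by
        rw [(by decide : Even 4).pow_abs, ← pow_mul_pow_sub _ (show 2 ≤ 4 by norm_num), hsq]
        field_simp

section Laplace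

variable {κ : ℝ}

theorem tendsto_one_sub_mul_one_sub_cos_div_sqrt_pow (t : ℝ) :
    Tendsto (fun n : ℕ => (1 - κ * (1 - cos (t / √n))) ^ n) atTop
      (𝓝 (exp (-(κ / 2) * t ^ 2))) := by
  simp_rw [sub_eq_add_neg (1 : ℝ) (κ * _)]
  refine tendsto_one_add_pow_exp_of_tendsto ?_
  convert (tendsto_nat_mul_one_sub_cos_div_sqrt t).const_mul (-κ) using 1
  · ext n
    ring
  · congr 1
    ring

theorem one_sub_mul_one_sub_cos_nonneg (hκ : κ ≤ 1 / 2) (θ : ℝ) : 0 ≤ 1 - κ * (1 - cos θ) := by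
  nlinarith [mul_nonneg (sub_nonneg.2 hκ) (sub_nonneg.2 (cos_le_one θ)), neg_one_le_cos θ]

theorem one_sub_mul_one_sub_cos_le_exp (hκ : 0 ≤ κ) {θ : ℝ} (hθ : |θ| ≤ π) :
    1 - κ * (1 - cos θ) ≤ exp (-(2 * κ / π ^ 2) * θ ^ 2) := by
  have hcos := mul_le_mul_of_nonneg_left
    (show 2 / π ^ 2 * θ ^ 2 ≤ 1 - cos θ by linarith [cos_le_one_sub_mul_cos_sq hθ]) hκ
  calc 1 - κ * (1 - cos θ) ≤ exp (-(κ * (1 - cos θ))) := by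
        linarith [add_one_le_exp (-(κ * (1 - cos θ)))]
    _ ≤ exp (-(2 * κ / π ^ 2) * θ ^ 2) :=
        exp_le_exp.2 (by linarith [show 2 * κ / π ^ 2 * θ ^ 2 = κ * (2 / π ^ 2 * θ ^ 2) by ring])

theorem norm_one_sub_mul_one_sub_cos_div_sqrt_pow_le (hκ₀ : 0 ≤ κ) (hκ : κ ≤ 1 / 2) {n : ℕ}
    {t : ℝ} (ht : |t| ≤ π * √n) :
    ‖(1 - κ * (1 - cos (t / √n))) ^ n‖ ≤ exp (-(2 * κ / π ^ 2) * t ^ 2) := by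
  rcases Nat.eq_zero_or_pos n with rfl | hn
  · simp_all
  have hs : 0 < √n := sqrt_pos.2 (Nat.cast_pos.2 hn)
  have hθ : |t / √n| ≤ π := by
    rw [abs_div, abs_of_pos hs]
    exact div_le_of_le_mul₀ hs.le pi_pos.le ht
  rw [norm_pow, Real.norm_of_nonneg (one_sub_mul_one_sub_cos_nonneg hκ _)]
  calc (1 - κ * (1 - cos (t / √n))) ^ n ≤ exp (-(2 * κ / π ^ 2) * (t / √n) ^ 2) ^ n := by
        gcongr
        exacts [one_sub_mul_one_sub_cos_nonneg hκ _, one_sub_mul_one_sub_cos_le_exp hκ₀ hθ]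
    _ = exp (-(2 * κ / π ^ 2) * t ^ 2) := by
        rw [← exp_nat_mul, div_pow, sq_sqrt (Nat.cast_nonneg n)]
        field_simp

theorem mul_intervalIntegral_eq_integral_indicator_comp_div (f : ℝ → ℝ) {a b c : ℝ}
    (hab : a ≤ b) (hc : 0 < c) :
    c * ∫ x in a..b, f x = ∫ t, (Ioc (a * c) (b * c)).indicator (fun t => f (t / c)) t := by
  rw [integral_indicator measurableSet_Ioc, ← intervalIntegral.integral_of_le (by gcongr),
    intervalIntegral.integral_comp_div _ hc.ne', mul_div_cancel_right₀ _ hc.ne',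
    mul_div_cancel_right₀ _ hc.ne', smul_eq_mul]

theorem tendsto_sqrt_mul_integral_one_sub_mul_one_sub_cos_pow (hκ₀ : 0 < κ) (hκ : κ ≤ 1 / 2) :
    Tendsto (fun n : ℕ => √n * ∫ θ in -π..π, (1 - κ * (1 - cos θ)) ^ n) atTop
      (𝓝 (√(2 * π / κ))) := by
  set F : ℕ → ℝ → ℝ := fun n =>
    (Ioc (-π * √n) (π * √n)).indicator fun t => (1 - κ * (1 - cos (t / √n))) ^ n
  have hF : ∀ᶠ n : ℕ in atTop, ∫ t, F n t = √n * ∫ θ in -π..π, (1 - κ * (1 - cos θ)) ^ n := by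
    filter_upwards [eventually_gt_atTop 0] with n hn
    exact (mul_intervalIntegral_eq_integral_indicator_comp_div
      (fun θ => (1 - κ * (1 - cos θ)) ^ n) (neg_le_self pi_pos.le)
      (sqrt_pos.2 (Nat.cast_pos.2 hn))).symm
  have hmeas : ∀ n, AEStronglyMeasurable (F n) volume := fun n =>
    (Continuous.aestronglyMeasurable (by fun_prop)).indicator measurableSet_Ioc
  have hbound : ∀ n t, ‖F n t‖ ≤ exp (-(2 * κ / π ^ 2) * t ^ 2) := by
    intro n t
    dsimp only [F]
    by_cases ht : t ∈ Ioc (-π * √n) (π * √n)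
    · rw [indicator_of_mem ht]
      exact norm_one_sub_mul_one_sub_cos_div_sqrt_pow_le hκ₀.le hκ
        (abs_le.2 ⟨by linarith [ht.1], ht.2⟩)
    · rw [indicator_of_notMem ht, norm_zero]
      exact (exp_pos _).le
  have hlim : ∀ t, Tendsto (fun n => F n t) atTop (𝓝 (exp (-(κ / 2) * t ^ 2))) := by
    intro t
    refine (tendsto_one_sub_mul_one_sub_cos_div_sqrt_pow t).congr' ?_
    have hsqrt := (tendsto_sqrt_atTop.comp tendsto_natCast_atTop_atTop).const_mul_atTop pi_pos
    filter_upwards [hsqrt.eventually_gt_atTop |t|] with n hn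
    simp only [Function.comp_apply] at hn
    dsimp only [F]
    rw [indicator_of_mem (show t ∈ Ioc (-π * √n) (π * √n) from
      ⟨by linarith [neg_abs_le t], hn.le.trans' (le_abs_self t)⟩)]
  have hDCT := tendsto_integral_of_dominated_convergence _ hmeas
    (integrable_exp_neg_mul_sq (by positivity)) (fun n => ae_of_all _ (hbound n))
    (ae_of_all _ hlim)
  rw [integral_gaussian, div_div_eq_mul_div, mul_comm] at hDCT
  exact hDCT.congr' hF

end Laplace

theorem tendsto_sqrt_mul_integral_add_mul_cos_pow_div_pow {a b : ℝ} (hb : 0 < b) (hba : b ≤ a) :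
    Tendsto (fun n : ℕ => √n * (∫ θ in -π..π, (a + b * cos θ) ^ n) / (a + b) ^ n) atTop
      (𝓝 (√(2 * π * (a + b) / b))) := by
  have hab : 0 < a + b := by linarith
  have h := tendsto_sqrt_mul_integral_one_sub_mul_one_sub_cos_pow (κ := b / (a + b))
    (by positivity) (by rw [div_le_iff₀ hab]; linarith)
  rw [div_div_eq_mul_div] at h
  refine h.congr fun n => ?_
  rw [mul_div_assoc, ← intervalIntegral.integral_div]
  congr 2 with θ
  rw [← div_pow]
  field_simp
  ring

theorem tendsto_sqrt_div_pow_of_one_lt {r : ℝ} (hr : 1 < r) :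
    Tendsto (fun n : ℕ => √n / r ^ n) atTop (𝓝 0) := by
  refine squeeze_zero (fun n => by positivity) (fun n => ?_)
    (by simpa using tendsto_pow_const_div_const_pow_of_one_lt 1 hr)
  gcongr
  rcases Nat.eq_zero_or_pos n with rfl | hn
  · simp
  · exact sqrt_le_self_iff.2 (Or.inr (Nat.one_le_cast.2 hn))

theorem sqrt_two_pi_mul_div_two_sqrt_two_div_four_pi {r : ℝ} (hr : 0 ≤ r) :
    √(2 * π * r / (2 * √2)) / (4 * π) = 2 ^ (-(9 : ℝ) / 4) * √(r / π) := by
  have hc : ((2 : ℝ) ^ (-(9 : ℝ) / 4)) ^ 4 = (2 ^ 9)⁻¹ := by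
    rw [← rpow_natCast, ← rpow_mul zero_le_two]
    norm_num
  refine (pow_left_inj₀ (by positivity) (by positivity) four_ne_zero).1 ?_
  rw [mul_pow, hc, show 4 = 2 * 2 from rfl, pow_mul, pow_mul, div_pow, sq_sqrt (by positivity),
    sq_sqrt (by positivity)]
  field_simp
  rw [sq_sqrt zero_le_two]
  ring

theorem birthdayMulFun_diag_asymptotic :
    Filter.Tendsto
      (fun n : ℕ => (birthdayMulFun n n : ℝ) * Real.sqrt n / (3 + 2 * Real.sqrt 2) ^ n)
      Filter.atTop
      (nhds ((2 : ℝ) ^ (-(9 : ℝ) / 4) *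
        Real.sqrt ((3 + 2 * Real.sqrt 2) / Real.pi))) := by
  have hs : √2 < 3 / 2 := by rw [sqrt_lt' (by norm_num)]; norm_num
  have hlaplace := tendsto_sqrt_mul_integral_add_mul_cos_pow_div_pow (a := 3) (b := 2 * √2)
    (by positivity) (by linarith)
  have hlim := (hlaplace.div_const (4 * π)).sub
    ((tendsto_sqrt_div_pow_of_one_lt (r := 3 + 2 * √2) (by linarith [sqrt_nonneg 2])).div_const 2)
  rw [zero_div, sub_zero, sqrt_two_pi_mul_div_two_sqrt_two_div_four_pi (by positivity)] at hlim
  refine hlim.congr fun n => ?_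
  rw [integral_three_add_two_sqrt_two_mul_cos_pow]
  field_simp
  ring
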